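/- arXiv:2302.03101 — 4 statements merged into one kernel-verified Lean document; each statement's English description precedes it below -/
import Mathlib

section
/- For all integers n ≥ 2 and N ≥ 2, the partial product over primes p ≥ N satisfies: 1 - 1/((n-1)(N-1)^{n-1}) < ∏_{p prime, p ≥ N} α_{p,n} < 1, and 1 < ∏_{p prime, p ≥ N} α_{p,n}^{-1} < 1 + 1/((n-1)(N-1)^{n-1}), where α_{p,n} = (1 - p^{-n})/(1 - p^{-(n+1)}). -/
/-!
Each factor satisfies `1 - p⁻ⁿ ≤ α_{p,n} < 1` and `α_{p,n}⁻¹ ≤ 1 + p⁻ⁿ`. Hence the product is at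
least `1 - ∑_{p ≥ N} p⁻ⁿ`, and the product of the inverses is at most `∏_{p ≥ N} (1 + p⁻ⁿ)`, which
expands to a sum of `d⁻ⁿ` over distinct squarefree `d ≥ N` and so is at most `1 + ∑_{m ≥ N} m⁻ⁿ`.
Finally `∑_{m ≥ N} m⁻ⁿ < 1 / ((n - 1) (N - 1)ⁿ⁻¹)` by telescoping, since
`m⁻ⁿ < B(m) - B(m + 1)` for `B(x) = 1 / ((n - 1) (x - 1)ⁿ⁻¹)`.
-/

open Finset

noncomputable def alphaFactor (n : ℕ) (x : ℝ) : ℝ := (1 - 1 / x ^ n) / (1 - 1 / x ^ (n + 1))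

section alphaFactor

variable {n : ℕ} {x : ℝ}

lemma one_div_pow_lt_one (hn : n ≠ 0) (hx : 1 < x) : 1 / x ^ n < 1 := by
  rw [div_lt_one (by positivity)]
  exact one_lt_pow₀ hx hn

lemma alphaFactor_pos (hn : n ≠ 0) (hx : 1 < x) : 0 < alphaFactor n x :=
  div_pos (sub_pos.2 (one_div_pow_lt_one hn hx))
    (sub_pos.2 (one_div_pow_lt_one n.add_one_ne_zero hx))

lemma alphaFactor_lt_one (hx : 1 < x) : alphaFactor n x < 1 := by
  rw [alphaFactor, div_lt_one (sub_pos.2 (one_div_pow_lt_one n.add_one_ne_zero hx))]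
  linarith [one_div_pow_lt_one_div_pow_of_lt hx n.lt_add_one]

lemma one_sub_one_div_pow_le_alphaFactor (hn : n ≠ 0) (hx : 1 < x) :
    1 - 1 / x ^ n ≤ alphaFactor n x :=
  le_div_self (sub_pos.2 (one_div_pow_lt_one hn hx)).le
    (sub_pos.2 (one_div_pow_lt_one n.add_one_ne_zero hx)) (sub_le_self _ (by positivity))

-- `(1 - 1/x^(n+1)) ≤ (1 - 1/x^n) (1 + 1/x^n)` because `x^(n+1) ≤ x^(2n)`.
lemma inv_alphaFactor_le (hn : n ≠ 0) (hx : 1 < x) : (alphaFactor n x)⁻¹ ≤ 1 + 1 / x ^ n := by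
  have hu := one_div_pow_lt_one hn hx
  have hsq : (1 / x ^ n) ^ 2 ≤ 1 / x ^ (n + 1) := by
    rw [div_pow, one_pow, ← pow_mul]
    exact one_div_pow_le_one_div_pow_of_le hx.le (by omega)
  rw [alphaFactor, inv_div, div_le_iff₀ (by linarith)]
  nlinarith

end alphaFactor

-- `tailBound n x = ∫_{x-1}^∞ t⁻ⁿ dt`
noncomputable def tailBound (n : ℕ) (x : ℝ) : ℝ := 1 / (((n : ℝ) - 1) * (x - 1) ^ (n - 1))

section tailBound

variable {n : ℕ} {x : ℝ}

lemma tailBound_nonneg (hn : 1 ≤ n) (hx : 1 ≤ x) : 0 ≤ tailBound n x := by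
  have hn' : (1 : ℝ) ≤ n := by exact_mod_cast hn
  have hx' : 0 ≤ x - 1 := by linarith
  unfold tailBound
  positivity

-- Bernoulli's inequality `yᵐ + m yᵐ⁻¹ ≤ (y + 1)ᵐ` with `y = x - 1` and `m = n - 1`.
lemma one_div_pow_lt_tailBound_sub (hn : 2 ≤ n) (hx : 1 < x) :
    1 / x ^ n < tailBound n x - tailBound n (x + 1) := by
  obtain ⟨k, rfl⟩ : ∃ k, n = k + 1 + 1 := ⟨n - 2, by omega⟩
  obtain ⟨y, hy, rfl⟩ : ∃ y, 0 < y ∧ x = y + 1 := ⟨x - 1, by linarith, by ring⟩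
  have hbern := pow_add_mul_le_add_pow hy.le (by linarith : (0 : ℝ) ≤ 2 * y + 1) (k + 1)
  simp only [tailBound, Nat.add_sub_cancel, add_sub_cancel_right] at hbern ⊢
  push_cast at hbern ⊢
  rw [show (k : ℝ) + 1 + 1 - 1 = k + 1 by ring]
  calc 1 / (y + 1) ^ (k + 1 + 1) < 1 / (y * (y + 1) ^ (k + 1)) := by
        rw [pow_succ _ (k + 1), mul_comm]
        gcongr
        linarith
    _ = (k + 1) * y ^ k / ((k + 1) * y ^ (k + 1) * (y + 1) ^ (k + 1)) := by
        field_simp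
        ring
    _ ≤ ((y + 1) ^ (k + 1) - y ^ (k + 1)) / ((k + 1) * y ^ (k + 1) * (y + 1) ^ (k + 1)) := by
        gcongr
        linarith
    _ = 1 / ((k + 1) * y ^ (k + 1)) - 1 / ((k + 1) * (y + 1) ^ (k + 1)) := by
        field_simp

lemma sum_range_one_div_add_pow_le (hn : 2 ≤ n) (hx : 1 < x) (K : ℕ) :
    ∑ k ∈ range K, 1 / ((k : ℝ) + x) ^ n ≤ tailBound n x - tailBound n (K + x) := by
  induction K with
  | zero => simp
  | succ K ih =>
    have hstep :=
      one_div_pow_lt_tailBound_sub hn (x := K + x) (by linarith [K.cast_nonneg (α := ℝ)])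
    rw [sum_range_succ, Nat.cast_succ, add_right_comm]
    linarith

lemma sum_range_one_div_add_pow_le_tailBound (hn : 2 ≤ n) (hx : 1 < x) (K : ℕ) :
    ∑ k ∈ range K, 1 / ((k : ℝ) + x) ^ n ≤ tailBound n x :=
  (sum_range_one_div_add_pow_le hn hx K).trans
    (sub_le_self _ (tailBound_nonneg (by omega) (by linarith [K.cast_nonneg (α := ℝ)])))

lemma summable_one_div_add_pow (hn : 2 ≤ n) (hx : 1 < x) :
    Summable fun k : ℕ ↦ 1 / ((k : ℝ) + x) ^ n :=
  summable_of_sum_range_le (fun k ↦ by positivity) (sum_range_one_div_add_pow_le_tailBound hn hx)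

lemma tsum_one_div_add_pow_le_tailBound (hn : 2 ≤ n) (hx : 1 < x) :
    ∑' k : ℕ, 1 / ((k : ℝ) + x) ^ n ≤ tailBound n x :=
  Real.tsum_le_of_sum_range_le (fun k ↦ by positivity)
    (sum_range_one_div_add_pow_le_tailBound hn hx)

lemma tsum_one_div_add_pow_lt_tailBound (hn : 2 ≤ n) (hx : 1 < x) :
    ∑' k : ℕ, 1 / ((k : ℝ) + x) ^ n < tailBound n x := by
  have hshift : ∀ k : ℕ, ((k + 1 : ℕ) : ℝ) + x = k + (x + 1) := fun k ↦ by push_cast; ring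
  rw [(summable_one_div_add_pow hn hx).tsum_eq_zero_add]
  simp only [hshift, Nat.cast_zero, zero_add]
  linarith [tsum_one_div_add_pow_le_tailBound hn (by linarith : 1 < x + 1),
    one_div_pow_lt_tailBound_sub hn hx]

end tailBound

lemma Finset.one_sub_sum_le_prod_one_sub {ι R : Type*} [CommRing R] [LinearOrder R]
    [IsStrictOrderedRing R] (s : Finset ι) {a : ι → R} (h0 : ∀ i ∈ s, 0 ≤ a i)
    (h1 : ∀ i ∈ s, a i ≤ 1) : 1 - ∑ i ∈ s, a i ≤ ∏ i ∈ s, (1 - a i) := by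
  classical
  induction s using Finset.induction with
  | empty => simp
  | insert j s hj ih =>
    rw [prod_insert hj, sum_insert hj]
    have ih := ih (fun i hi ↦ h0 i (mem_insert_of_mem hi)) (fun i hi ↦ h1 i (mem_insert_of_mem hi))
    have hj0 := h0 j (mem_insert_self j s)
    have hj1 := h1 j (mem_insert_self j s)
    have hs0 : 0 ≤ ∑ i ∈ s, a i := sum_nonneg fun i hi ↦ h0 i (mem_insert_of_mem hi)
    nlinarith

lemma Finset.sum_le_tsum_nat_add {f : ℕ → ℝ} (hf : ∀ m, 0 ≤ f m) (hsum : Summable f) {N : ℕ}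
    {s : Finset ℕ} (hs : ∀ m ∈ s, N ≤ m) : ∑ m ∈ s, f m ≤ ∑' k, f (k + N) := by
  have hinj : Set.InjOn (· - N) (s : Set ℕ) := fun a ha b hb hab ↦ by
    have := hs a ha; have := hs b hb; simp only at hab; omega
  calc ∑ m ∈ s, f m = ∑ k ∈ s.image (· - N), f (k + N) := by
        rw [sum_image hinj]
        exact sum_congr rfl fun m hm ↦ by rw [Nat.sub_add_cancel (hs m hm)]
    _ ≤ ∑' k, f (k + N) :=
        ((summable_nat_add_iff N).2 hsum).sum_le_tsum _ fun k _ ↦ hf _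

-- Expanding the product gives `∑ 1 / d ^ n` over the products `d` of the subsets of `s`; these
-- are distinct by unique factorization, and `≥ N` except for the empty product.
lemma prod_one_add_one_div_pow_le {n N : ℕ} (hn : 2 ≤ n) {s : Finset ℕ}
    (hs : ∀ p ∈ s, p.Prime ∧ N ≤ p) :
    ∏ p ∈ s, (1 + 1 / (p : ℝ) ^ n) ≤ 1 + ∑' k : ℕ, 1 / ((k : ℝ) + N) ^ n := by
  classical
  set t := s.powerset.erase ∅
  have hinj : Set.InjOn (fun u : Finset ℕ ↦ ∏ p ∈ u, p) t := fun u hu v hv huv ↦ by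
    have hu := mem_powerset.1 (mem_of_mem_erase hu)
    have hv := mem_powerset.1 (mem_of_mem_erase hv)
    rw [← Nat.primeFactors_prod fun p hp ↦ (hs p (hu hp)).1,
      ← Nat.primeFactors_prod fun p hp ↦ (hs p (hv hp)).1]
    exact congrArg _ huv
  have hge : ∀ d ∈ t.image (fun u ↦ ∏ p ∈ u, p), N ≤ d := by
    simp only [mem_image]
    rintro d ⟨u, hu, rfl⟩
    obtain ⟨p, hp⟩ := nonempty_iff_ne_empty.2 (ne_of_mem_erase hu)
    have hsub := mem_powerset.1 (mem_of_mem_erase hu)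
    exact (hs p (hsub hp)).2.trans
      (Nat.le_of_dvd (prod_pos fun q hq ↦ (hs q (hsub hq)).1.pos) (dvd_prod_of_mem _ hp))
  have hsum : Summable fun d : ℕ ↦ 1 / (d : ℝ) ^ n := Real.summable_one_div_nat_pow.2 (by omega)
  calc ∏ p ∈ s, (1 + 1 / (p : ℝ) ^ n)
      = 1 + ∑ u ∈ t, 1 / ((∏ p ∈ u, p : ℕ) : ℝ) ^ n := by
        rw [prod_one_add, ← add_sum_erase _ _ (empty_mem_powerset s), prod_empty]
        congr 1
        exact sum_congr rfl fun u _ ↦ by simp [prod_pow]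
    _ = 1 + ∑ d ∈ t.image (fun u ↦ ∏ p ∈ u, p), 1 / (d : ℝ) ^ n := by rw [sum_image hinj]
    _ ≤ 1 + ∑' k : ℕ, 1 / ((k : ℝ) + N) ^ n := by
        gcongr
        simpa using (t.image _).sum_le_tsum_nat_add (fun d ↦ by positivity) hsum hge

lemma tprod_le_of_nonneg_of_le_one {ι : Type*} {f : ι → ℝ} (hf : Multipliable f)
    (h0 : ∀ j, 0 ≤ f j) (h1 : ∀ j, f j ≤ 1) (i : ι) : ∏' j, f j ≤ f i := by
  classical
  refine le_of_tendsto hf.hasProd ?_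
  filter_upwards [Filter.eventually_ge_atTop {i}] with s hs
  rw [← mul_prod_erase s f (singleton_subset_iff.1 hs)]
  exact mul_le_of_le_one_right (h0 i) (prod_le_one (fun j _ ↦ h0 j) fun j _ ↦ h1 j)

section PrimeFamily

variable {ι : Type*} {q : ι → ℕ} {n N : ℕ}

lemma summable_one_div_pow_of_injective (hn : 2 ≤ n) (hinj : q.Injective) :
    Summable fun i ↦ 1 / (q i : ℝ) ^ n :=
  (Real.summable_one_div_nat_pow.2 (by omega)).comp_injective hinj

lemma sum_one_div_pow_le_tsum (hn : 2 ≤ n) (hqN : ∀ i, N ≤ q i) (hinj : q.Injective)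
    (s : Finset ι) : ∑ i ∈ s, 1 / (q i : ℝ) ^ n ≤ ∑' k : ℕ, 1 / ((k : ℝ) + N) ^ n := by
  rw [← sum_image (f := fun m : ℕ ↦ 1 / (m : ℝ) ^ n) hinj.injOn]
  simpa using (s.image q).sum_le_tsum_nat_add (fun m ↦ by positivity)
    (Real.summable_one_div_nat_pow.2 (by omega)) (by simp [hqN])

lemma multipliable_alphaFactor (hn : 2 ≤ n) (hq : ∀ i, 1 < q i) (hinj : q.Injective) :
    Multipliable fun i ↦ alphaFactor n (q i) := by
  have hdist : ∀ i, ‖alphaFactor n (q i) - 1‖ ≤ 1 / (q i : ℝ) ^ n := fun i ↦ by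
    have hqi : (1 : ℝ) < q i := by exact_mod_cast hq i
    rw [Real.norm_eq_abs, abs_sub_comm, abs_of_pos (sub_pos.2 (alphaFactor_lt_one hqi))]
    linarith [one_sub_one_div_pow_le_alphaFactor (by omega : n ≠ 0) hqi]
  simpa using Real.multipliable_one_add_of_summable
    ((summable_one_div_pow_of_injective hn hinj).of_norm_bounded hdist)

lemma one_sub_tsum_le_prod_alphaFactor (hn : 2 ≤ n) (hq : ∀ i, 1 < q i) (hqN : ∀ i, N ≤ q i)
    (hinj : q.Injective) (s : Finset ι) :
    1 - ∑' k : ℕ, 1 / ((k : ℝ) + N) ^ n ≤ ∏ i ∈ s, alphaFactor n (q i) := by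
  have hqi : ∀ i, (1 : ℝ) < q i := fun i ↦ by exact_mod_cast hq i
  have hlt : ∀ i, 1 / (q i : ℝ) ^ n < 1 := fun i ↦ one_div_pow_lt_one (by omega) (hqi i)
  calc 1 - ∑' k : ℕ, 1 / ((k : ℝ) + N) ^ n ≤ 1 - ∑ i ∈ s, 1 / (q i : ℝ) ^ n := by
        linarith [sum_one_div_pow_le_tsum hn hqN hinj s]
    _ ≤ ∏ i ∈ s, (1 - 1 / (q i : ℝ) ^ n) :=
        s.one_sub_sum_le_prod_one_sub (fun i _ ↦ by positivity) fun i _ ↦ (hlt i).le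
    _ ≤ ∏ i ∈ s, alphaFactor n (q i) :=
        prod_le_prod (fun i _ ↦ sub_nonneg.2 (hlt i).le)
          fun i _ ↦ one_sub_one_div_pow_le_alphaFactor (by omega) (hqi i)

lemma prod_inv_alphaFactor_le_one_add_tsum (hn : 2 ≤ n) (hq : ∀ i, (q i).Prime)
    (hqN : ∀ i, N ≤ q i) (hinj : q.Injective) (s : Finset ι) :
    ∏ i ∈ s, (alphaFactor n (q i))⁻¹ ≤ 1 + ∑' k : ℕ, 1 / ((k : ℝ) + N) ^ n := by
  have hqi : ∀ i, (1 : ℝ) < q i := fun i ↦ by exact_mod_cast (hq i).one_lt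
  calc ∏ i ∈ s, (alphaFactor n (q i))⁻¹ ≤ ∏ i ∈ s, (1 + 1 / (q i : ℝ) ^ n) :=
        prod_le_prod (fun i _ ↦ (inv_pos.2 (alphaFactor_pos (by omega) (hqi i))).le)
          fun i _ ↦ inv_alphaFactor_le (by omega) (hqi i)
    _ = ∏ p ∈ s.image q, (1 + 1 / (p : ℝ) ^ n) :=
        (prod_image (f := fun p : ℕ ↦ 1 + 1 / (p : ℝ) ^ n) hinj.injOn).symm
    _ ≤ 1 + ∑' k : ℕ, 1 / ((k : ℝ) + N) ^ n :=
        prod_one_add_one_div_pow_le hn (by simp [hq, hqN])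

theorem tprod_alphaFactor_bounds [Nonempty ι] (hn : 2 ≤ n) (hq : ∀ i, (q i).Prime)
    (hqN : ∀ i, N ≤ q i) (hinj : q.Injective) :
    Multipliable (fun i ↦ alphaFactor n (q i)) ∧
    1 - ∑' k : ℕ, 1 / ((k : ℝ) + N) ^ n ≤ ∏' i, alphaFactor n (q i) ∧
    ∏' i, alphaFactor n (q i) < 1 ∧
    1 < ∏' i, (alphaFactor n (q i))⁻¹ ∧
    ∏' i, (alphaFactor n (q i))⁻¹ ≤ 1 + ∑' k : ℕ, 1 / ((k : ℝ) + N) ^ n := by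
  set T := ∑' k : ℕ, 1 / ((k : ℝ) + N) ^ n
  have hT : 0 < 1 + T := by linarith [show 0 ≤ T from tsum_nonneg fun k ↦ by positivity]
  have hqi : ∀ i, (1 : ℝ) < q i := fun i ↦ by exact_mod_cast (hq i).one_lt
  have hpos : ∀ i, 0 < alphaFactor n (q i) := fun i ↦ alphaFactor_pos (by omega) (hqi i)
  have hmul := multipliable_alphaFactor hn (fun i ↦ (hq i).one_lt) hinj
  have hge_one_sub := le_hasProd_of_le_prod hmul.hasProd
    (one_sub_tsum_le_prod_alphaFactor hn (fun i ↦ (hq i).one_lt) hqN hinj)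
  have hge_inv : (1 + T)⁻¹ ≤ ∏' i, alphaFactor n (q i) :=
    le_hasProd_of_le_prod hmul.hasProd fun s ↦ by
      rw [inv_le_comm₀ hT (prod_pos fun i _ ↦ hpos i), ← prod_inv_distrib]
      exact prod_inv_alphaFactor_le_one_add_tsum hn hq hqN hinj s
  have hprod_pos : 0 < ∏' i, alphaFactor n (q i) := (inv_pos.2 hT).trans_le hge_inv
  obtain ⟨i⟩ := ‹Nonempty ι›
  have hlt : ∏' i, alphaFactor n (q i) < 1 :=
    (tprod_le_of_nonneg_of_le_one hmul (fun j ↦ (hpos j).le)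
      (fun j ↦ (alphaFactor_lt_one (hqi j)).le) i).trans_lt (alphaFactor_lt_one (hqi i))
  rw [hmul.tprod_inv₀ hprod_pos.ne']
  exact ⟨hmul, hge_one_sub, hlt, (one_lt_inv₀ hprod_pos).2 hlt, inv_le_of_inv_le₀ hT hge_inv⟩

end PrimeFamily

theorem tail_prod_alpha_bounds (n N : ℕ) (hn : 2 ≤ n) (hN : 2 ≤ N) :
    Multipliable (fun p : {p : Nat.Primes // N ≤ (p : ℕ)} =>
      (1 - 1 / (((p : Nat.Primes) : ℕ) : ℝ) ^ n) /
        (1 - 1 / (((p : Nat.Primes) : ℕ) : ℝ) ^ (n + 1))) ∧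
    1 - 1 / (((n : ℝ) - 1) * ((N : ℝ) - 1) ^ (n - 1)) <
      (∏' p : {p : Nat.Primes // N ≤ (p : ℕ)},
        (1 - 1 / (((p : Nat.Primes) : ℕ) : ℝ) ^ n) /
          (1 - 1 / (((p : Nat.Primes) : ℕ) : ℝ) ^ (n + 1))) ∧
    (∏' p : {p : Nat.Primes // N ≤ (p : ℕ)},
        (1 - 1 / (((p : Nat.Primes) : ℕ) : ℝ) ^ n) /
          (1 - 1 / (((p : Nat.Primes) : ℕ) : ℝ) ^ (n + 1))) < 1 ∧
    1 < (∏' p : {p : Nat.Primes // N ≤ (p : ℕ)},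
        ((1 - 1 / (((p : Nat.Primes) : ℕ) : ℝ) ^ n) /
          (1 - 1 / (((p : Nat.Primes) : ℕ) : ℝ) ^ (n + 1)))⁻¹) ∧
    (∏' p : {p : Nat.Primes // N ≤ (p : ℕ)},
        ((1 - 1 / (((p : Nat.Primes) : ℕ) : ℝ) ^ n) /
          (1 - 1 / (((p : Nat.Primes) : ℕ) : ℝ) ^ (n + 1)))⁻¹) <
      1 + 1 / (((n : ℝ) - 1) * ((N : ℝ) - 1) ^ (n - 1)) := by
  have : Nonempty {p : Nat.Primes // N ≤ (p : ℕ)} :=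
    let ⟨p, hNp, hp⟩ := Nat.exists_infinite_primes N
    ⟨⟨⟨p, hp⟩, hNp⟩⟩
  obtain ⟨hmul, hlow, hlt, hgt, hup⟩ :=
    tprod_alphaFactor_bounds (q := fun p : {p : Nat.Primes // N ≤ (p : ℕ)} ↦ (p : ℕ)) hn
      (fun p ↦ p.1.2) (fun p ↦ p.2) (Nat.Primes.coe_nat_injective.comp Subtype.val_injective)
  have htail := tsum_one_div_add_pow_lt_tailBound hn (by exact_mod_cast hN : (1 : ℝ) < N)
  unfold tailBound at htail
  unfold alphaFactor at hlow hup
  exact ⟨hmul, by linarith, hlt, hgt, by linarith⟩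
end

section
/- Let d ≥ 1 and let Λ^0(d,t) = {(λ_1,…,λ_d) ∈ ℤ_{≥0}^d : ∑_j j λ_j = t and λ_j = 0 whenever j does not divide d}. Let τ(d) be the number of divisors of d and σ(d) the sum of the divisors of d. If t ≥ d(τ(d) − 1) − σ(d) + 1, then the coordinatewise addition map Λ^0(d,t) × Λ^0(d,d) → Λ^0(d, t+d) is surjective. -/
theorem lambda0_addition_surjective (d t : ℕ) (hd : 1 ≤ d)
    (ht : (d : ℤ) * (d.divisors.card - 1) - (∑ j ∈ d.divisors, (j : ℤ)) + 1 ≤ t) :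
    ∀ ρ : Fin d → ℕ,
      (∀ j : Fin d, ¬ ((j : ℕ) + 1) ∣ d → ρ j = 0) →
      (∑ j : Fin d, ((j : ℕ) + 1) * ρ j) = t + d →
      ∃ lam lam' : Fin d → ℕ,
        (∀ j : Fin d, ¬ ((j : ℕ) + 1) ∣ d → lam j = 0) ∧
        (∑ j : Fin d, ((j : ℕ) + 1) * lam j) = t ∧
        (∀ j : Fin d, ¬ ((j : ℕ) + 1) ∣ d → lam' j = 0) ∧
        (∑ j : Fin d, ((j : ℕ) + 1) * lam' j) = d ∧
        lam + lam' = ρ := by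
  intro ρ hρ0 hρsum
  -- Key claim: some divisor index has a large value
  have key : ∃ j : Fin d, ((j : ℕ) + 1) ∣ d ∧ d / ((j : ℕ) + 1) ≤ ρ j := by
    by_contra hcon
    push_neg at hcon
    have hb : ∀ j : Fin d, ((j : ℕ) + 1) ∣ d → ((j : ℕ) + 1) * (ρ j + 1) ≤ d := by
      intro j hj
      have h1 : ρ j + 1 ≤ d / ((j : ℕ) + 1) := hcon j hj
      calc ((j : ℕ) + 1) * (ρ j + 1) ≤ ((j : ℕ) + 1) * (d / ((j : ℕ) + 1)) :=
            Nat.mul_le_mul_left _ h1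
        _ = d := Nat.mul_div_cancel' hj
    set s := Finset.univ.filter (fun j : Fin d => ((j : ℕ) + 1) ∣ d) with hs
    have step1 : (∑ j : Fin d, ((j : ℕ) + 1) * ρ j) = ∑ j ∈ s, ((j : ℕ) + 1) * ρ j := by
      rw [hs]
      refine (Finset.sum_filter_of_ne ?_).symm
      intro j _ hne
      by_contra hndvd
      exact hne (by rw [hρ0 j hndvd, Nat.mul_zero])
    have step2 : (∑ j ∈ s, ((j : ℕ) + 1) * ρ j) ≤ ∑ j ∈ s, (d - ((j : ℕ) + 1)) := by
      refine Finset.sum_le_sum ?_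
      intro j hj
      have hjd : ((j : ℕ) + 1) ∣ d := by
        rw [hs] at hj
        exact (Finset.mem_filter.mp hj).2
      have := hb j hjd
      have hexp : ((j : ℕ) + 1) * (ρ j + 1) = ((j : ℕ) + 1) * ρ j + ((j : ℕ) + 1) := by ring
      omega
    -- cast to ℤ and reindex over divisors
    have hmem : ∀ k ∈ d.divisors, 1 ≤ k ∧ k ≤ d := by
      intro k hk
      rw [Nat.mem_divisors] at hk
      exact ⟨Nat.pos_of_dvd_of_pos hk.1 hd, Nat.le_of_dvd hd hk.1⟩
    have step3 : (∑ j ∈ s, ((d - ((j : ℕ) + 1) : ℕ) : ℤ))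
        = ∑ k ∈ d.divisors, ((d : ℤ) - (k : ℤ)) := by
      refine Finset.sum_nbij' (fun j : Fin d => (j : ℕ) + 1)
        (fun k => if h : k ∈ d.divisors then ⟨k - 1, by have := hmem k h; omega⟩ else ⟨0, hd⟩)
        ?_ ?_ ?_ ?_ ?_
      · intro a ha
        rw [hs, Finset.mem_filter] at ha
        rw [Nat.mem_divisors]
        exact ⟨ha.2, by omega⟩
      · intro k hk
        have h1 := hmem k hk
        have hkd := (Nat.mem_divisors.mp hk).1
        beta_reduce
        rw [dif_pos hk]
        refine Finset.mem_filter.mpr ⟨Finset.mem_univ _, ?_⟩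
        show k - 1 + 1 ∣ d
        rwa [Nat.sub_add_cancel h1.1]
      · intro a ha
        rw [hs, Finset.mem_filter] at ha
        have hmem2 : (a : ℕ) + 1 ∈ d.divisors := Nat.mem_divisors.mpr ⟨ha.2, by omega⟩
        beta_reduce
        rw [dif_pos hmem2]
        ext
        simp
      · intro k hk
        have h1 := hmem k hk
        beta_reduce
        rw [dif_pos hk]
        show k - 1 + 1 = k
        omega
      · intro a ha
        have : (a : ℕ) + 1 ≤ d := a.2
        push_cast [Nat.cast_sub this]
        ring
    have hcast : ((t : ℤ) + d) ≤ ∑ k ∈ d.divisors, ((d : ℤ) - (k : ℤ)) := by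
      rw [← step3]
      have h0 : t + d ≤ ∑ j ∈ s, (d - ((j : ℕ) + 1)) := by
        rw [← hρsum, step1]; exact step2
      calc ((t : ℤ) + d) = ((t + d : ℕ) : ℤ) := by push_cast; ring
        _ ≤ ((∑ j ∈ s, (d - ((j : ℕ) + 1)) : ℕ) : ℤ) := by exact_mod_cast h0
        _ = ∑ j ∈ s, ((d - ((j : ℕ) + 1) : ℕ) : ℤ) := Nat.cast_sum _ _
    have hfinal : (∑ k ∈ d.divisors, ((d : ℤ) - (k : ℤ)))
        = (d : ℤ) * d.divisors.card - ∑ k ∈ d.divisors, (k : ℤ) := by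
      rw [Finset.sum_sub_distrib, Finset.sum_const, nsmul_eq_mul]
      ring
    rw [hfinal] at hcast
    linarith
  obtain ⟨j, hjd, hjρ⟩ := key
  classical
  refine ⟨fun i => ρ i - (if i = j then d / ((j : ℕ) + 1) else 0),
    fun i => if i = j then d / ((j : ℕ) + 1) else 0, ?_, ?_, ?_, ?_, ?_⟩
  · intro i hi
    rcases eq_or_ne i j with rfl | hne
    · exact absurd hjd hi
    · simp [hne, hρ0 i hi]
  · have h1 : (∑ i : Fin d, ((i : ℕ) + 1) * (if i = j then d / ((j : ℕ) + 1) else 0)) = d := by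
      rw [Finset.sum_eq_single j]
      · simp [Nat.mul_div_cancel' hjd]
      · intro i _ hne; simp [hne]
      · intro h; exact absurd (Finset.mem_univ j) h
    have h2 : (∑ i : Fin d, ((i : ℕ) + 1) * (ρ i - (if i = j then d / ((j : ℕ) + 1) else 0)))
        + (∑ i : Fin d, ((i : ℕ) + 1) * (if i = j then d / ((j : ℕ) + 1) else 0))
        = ∑ i : Fin d, ((i : ℕ) + 1) * ρ i := by
      rw [← Finset.sum_add_distrib]
      refine Finset.sum_congr rfl (fun i _ => ?_)
      rw [← Nat.mul_add]
      congr 1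
      rcases eq_or_ne i j with rfl | hne
      · simp; omega
      · simp [hne]
    show (∑ i : Fin d, ((i : ℕ) + 1) * (ρ i - (if i = j then d / ((j : ℕ) + 1) else 0))) = t
    omega
  · intro i hi
    rcases eq_or_ne i j with rfl | hne
    · exact absurd hjd hi
    · simp [hne]
  · rw [Finset.sum_eq_single j]
    · simp [Nat.mul_div_cancel' hjd]
    · intro i _ hne; simp [hne]
    · intro h; exact absurd (Finset.mem_univ j) h
  · funext i
    simp only [Pi.add_apply]
    rcases eq_or_ne i j with rfl | hne
    · simp; omega
    · simp [hne]
end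

section
/- Let p be a prime, m ≥ 0, and 0 ≤ j ≤ m-1. Let t ≥ 0 be an integer such that there is no a with 0 ≤ a ≤ p^j − 1 and t ≡ (p-1)p^j + a (mod p^{j+1}). Then the coordinatewise addition map Λ^0(p^m, t) × Λ^0(p^m, p^j) → Λ^0(p^m, t + p^j) is surjective, where Λ^0(p^m, s) is the set of tuples (λ_{p^0}, …, λ_{p^m}) of nonnegative integers with ∑_{i=0}^m p^i λ_{p^i} = s. -/
/-!
A splitting `ρ = λ + μ` with `μ` of weight `p ^ j` can only use coordinates `i ≤ j` for `μ`. The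
coordinates `i > j` carry a multiple of `p ^ (j + 1)`, so the low part of `ρ` has weight
`≡ t + p ^ j [MOD p ^ (j + 1)]`. The hypothesis on `t` says that its `j`-th base-`p` digit is not
`p - 1`, so adding `p ^ j` causes no carry and this residue is at least `p ^ j`. From powers
`p ^ i`, `i ≤ j`, of total weight at least `p ^ j`, a greedy choice extracts weight exactly `p ^ j`.
-/

theorem pow_le_add_pow_mod_pow_succ {p j t : ℕ} (hp : 0 < p)
    (ht : ∀ a < p ^ j, t % p ^ (j + 1) ≠ (p - 1) * p ^ j + a) :
    p ^ j ≤ (t + p ^ j) % p ^ (j + 1) := by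
  have hn : p ^ (j + 1) = (p - 1) * p ^ j + p ^ j := by
    rw [pow_succ', ← add_one_mul (p - 1), Nat.sub_one_add_one hp.ne']
  have hlt : t % p ^ (j + 1) < p ^ (j + 1) := Nat.mod_lt _ (by positivity)
  have hdigit : t % p ^ (j + 1) < (p - 1) * p ^ j := by
    by_contra! h
    exact ht _ (by omega) (Nat.add_sub_of_le h).symm
  rw [← Nat.mod_add_mod, Nat.mod_eq_of_lt (by omega)]
  exact Nat.le_add_left _ _

theorem sum_pow_mul_mod_pow_succ {n : ℕ} (p j : ℕ) (ρ : Fin n → ℕ) :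
    (∑ i : Fin n, p ^ (i : ℕ) * ρ i) % p ^ (j + 1)
      = (∑ i : Fin n, p ^ (i : ℕ) * if (i : ℕ) ≤ j then ρ i else 0) % p ^ (j + 1) := by
  rw [Finset.sum_nat_mod]
  conv_rhs => rw [Finset.sum_nat_mod]
  refine congrArg (· % _) (Finset.sum_congr rfl fun i _ => ?_)
  split_ifs with hi
  · rfl
  · rw [mul_zero, Nat.zero_mod]
    exact Nat.mod_eq_zero_of_dvd ((pow_dvd_pow p (by omega)).mul_right _)

/-- Greedy extraction, largest power first: the remainder left after taking copies of `p ^ n`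
is still divisible by every smaller power that occurs. -/
theorem exists_le_sum_pow_mul_eq (p : ℕ) : ∀ {n : ℕ} (ρ : Fin n → ℕ) {T : ℕ},
    (∀ i : Fin n, ρ i ≠ 0 → p ^ (i : ℕ) ∣ T) → T ≤ ∑ i : Fin n, p ^ (i : ℕ) * ρ i →
    ∃ μ ≤ ρ, ∑ i : Fin n, p ^ (i : ℕ) * μ i = T
  | 0, ρ, T, _, hT => ⟨ρ, le_rfl, by simp_all⟩
  | n + 1, ρ, T, hdvd, hT => by
    rw [Fin.sum_univ_castSucc] at hT
    simp only [Fin.val_castSucc, Fin.val_last] at hT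
    set d := min (T / p ^ n) (ρ (Fin.last n)) with hd
    have hdT : p ^ n * d ≤ T :=
      (Nat.mul_le_mul_left _ (min_le_left _ _)).trans (Nat.mul_div_le T _)
    have hrest : T - p ^ n * d ≤ ∑ i : Fin n, p ^ (i : ℕ) * ρ i.castSucc := by
      rcases le_total (T / p ^ n) (ρ (Fin.last n)) with h | h
      · rcases eq_or_ne (ρ (Fin.last n)) 0 with h0 | h0
        · simp only [hd, h0, min_eq_right (Nat.zero_le _), mul_zero, add_zero] at hT ⊢
          omega
        · rw [hd, min_eq_left h, Nat.mul_div_cancel' (by simpa using hdvd _ h0), Nat.sub_self]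
          exact Nat.zero_le _
      · rw [hd, min_eq_right h]
        omega
    obtain ⟨μ, hμρ, hμ⟩ := exists_le_sum_pow_mul_eq p (fun i => ρ i.castSucc)
      (fun i hi => Nat.dvd_sub (hdvd _ hi) ((pow_dvd_pow p i.is_lt.le).mul_right d)) hrest
    refine ⟨Fin.snoc (α := fun _ => ℕ) μ d, fun i => ?_, ?_⟩
    · induction i using Fin.lastCases with
      | last => simp [hd]
      | cast i => simpa using hμρ i
    · rw [Fin.sum_univ_castSucc]
      simp only [Fin.snoc_castSucc, Fin.snoc_last, Fin.val_castSucc, Fin.val_last, hμ]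
      omega

theorem lambda0_prime_power_addition_surjective_general (p m j t : ℕ) (hp : p.Prime)
    (ht : ∀ a : ℕ, a < p ^ j → t % p ^ (j + 1) ≠ (p - 1) * p ^ j + a) :
    ∀ ρ : Fin (m + 1) → ℕ, (∑ i : Fin (m + 1), p ^ (i : ℕ) * ρ i) = t + p ^ j →
      ∃ lam lam' : Fin (m + 1) → ℕ,
        (∑ i : Fin (m + 1), p ^ (i : ℕ) * lam i) = t ∧
        (∑ i : Fin (m + 1), p ^ (i : ℕ) * lam' i) = p ^ j ∧
        lam + lam' = ρ := by
  intro ρ hρ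
  set low : Fin (m + 1) → ℕ := fun i => if (i : ℕ) ≤ j then ρ i else 0
  have hlow : p ^ j ≤ ∑ i : Fin (m + 1), p ^ (i : ℕ) * low i := calc
    p ^ j ≤ (t + p ^ j) % p ^ (j + 1) := pow_le_add_pow_mod_pow_succ hp.pos ht
    _ = (∑ i : Fin (m + 1), p ^ (i : ℕ) * low i) % p ^ (j + 1) := by
      rw [← hρ, sum_pow_mul_mod_pow_succ]
    _ ≤ _ := Nat.mod_le _ _
  have hlow_dvd (i : Fin (m + 1)) (hi : low i ≠ 0) : p ^ (i : ℕ) ∣ p ^ j :=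
    pow_dvd_pow p (not_imp_comm.mp (fun h => if_neg h) hi)
  obtain ⟨μ, hμlow, hμ⟩ := exists_le_sum_pow_mul_eq p low hlow_dvd hlow
  have hμρ (i : Fin (m + 1)) : μ i ≤ ρ i :=
    (hμlow i).trans (by simp only [low]; split_ifs <;> simp)
  refine ⟨ρ - μ, μ, ?_, hμ, funext fun i => Nat.sub_add_cancel (hμρ i)⟩
  calc _ = ∑ i : Fin (m + 1), (p ^ (i : ℕ) * ρ i - p ^ (i : ℕ) * μ i) := by
        simp only [Pi.sub_apply, Nat.mul_sub]
    _ = t := by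
        rw [Finset.sum_tsub_distrib _ fun i _ => Nat.mul_le_mul_left _ (hμρ i), hρ, hμ,
          Nat.add_sub_cancel]

theorem lambda0_prime_power_addition_surjective (p m j t : ℕ) (hp : p.Prime)
    (hm : 1 ≤ m) (hj : j < m)
    (ht : ∀ a : ℕ, a < p ^ j → t % p ^ (j + 1) ≠ (p - 1) * p ^ j + a) :
    ∀ ρ : Fin (m + 1) → ℕ, (∑ i : Fin (m + 1), p ^ (i : ℕ) * ρ i) = t + p ^ j →
      ∃ lam lam' : Fin (m + 1) → ℕ,
        (∑ i : Fin (m + 1), p ^ (i : ℕ) * lam i) = t ∧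
        (∑ i : Fin (m + 1), p ^ (i : ℕ) * lam' i) = p ^ j ∧
        lam + lam' = ρ :=
  lambda0_prime_power_addition_surjective_general p m j t hp ht
end

section
/- The formal power series identity ∑_{m=0}^∞ ∑_{k=0}^m f(m,k) x^m y^k = (1-x)^{-y} = ∑_{m=0}^∞ (∏_{j=0}^{m-1}(y+j)/m!) x^m holds, where f(m,k) = ∑_{λ ∈ P(m,k)} ∏_{n=1}^m 1/(n^{b_n(λ)} b_n(λ)!) and f(0,0) = 1. Equivalently, ∏_{n=1}^∞ exp(x^n y / n) = (1-x)^{-y} as formal power series in x with coefficients polynomials in y. -/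
/-!
Put `P_m(y) = ∑_{λ ⊢ m} y^{ℓ(λ)} / z_λ` with `z_λ = ∏ n^{b_n(λ)} b_n(λ)!`; its `y^k`-coefficient
is `f(m,k)`. Since `m = ∑ n b_n(λ)` and `z_λ = n b_n(λ) z_{λ∖n}` for each part `n`, we get
`m / z_λ = ∑_{n ∈ λ distinct} 1 / z_{λ∖n}`, and removing a part `n` is a bijection onto the
partitions of `m - n`. Hence `m P_m = y ∑_{j<m} P_j`. The coefficients `(y)_m / m!` of
`(1-x)^{-y}` satisfy the same recursion, because `(m+1) (y)_{m+1} / (m+1)! = (y+m) (y)_m / m!`,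
and both sequences start with `1`.
-/

/-- `partWeight m k` is `∑_{λ ∈ P(m,k)} ∏_{n=1}^m 1/(n^{b_n(λ)} b_n(λ)!)`, where `P(m,k)`
is the set of partitions of `m` into exactly `k` parts and `b_n(λ)` is the multiplicity of
`n` in `λ`; in particular `partWeight 0 0 = 1`. -/
noncomputable def partWeight (m k : ℕ) : ℚ :=
  ∑ lam ∈ Finset.univ.filter (fun lam : Nat.Partition m => lam.parts.card = k),
    ∏ n ∈ Finset.Icc 1 m,
      1 / ((n : ℚ) ^ (lam.parts.count n) * (Nat.factorial (lam.parts.count n)))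

open Finset Polynomial

/-- Macdonald's `z_λ`, the order of the centralizer of a permutation of cycle type `λ`. -/
def zFactor (s : Multiset ℕ) : ℕ :=
  ∏ n ∈ s.toFinset, n ^ s.count n * (s.count n).factorial

lemma zFactor_eq_prod_of_subset {s : Multiset ℕ} {t : Finset ℕ} (h : s.toFinset ⊆ t) :
    zFactor s = ∏ n ∈ t, n ^ s.count n * (s.count n).factorial :=
  prod_subset h fun n _ hn => by simp [Multiset.count_eq_zero.2 (by simpa using hn)]

lemma zFactor_cons (n : ℕ) (s : Multiset ℕ) :
    zFactor (n ::ₘ s) = n * (s.count n + 1) * zFactor s := by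
  rw [zFactor_eq_prod_of_subset (Multiset.toFinset_cons n s).le,
    zFactor_eq_prod_of_subset (subset_insert n s.toFinset),
    ← mul_prod_erase _ _ (mem_insert_self n _), ← mul_prod_erase _ _ (mem_insert_self n _),
    prod_congr rfl fun x hx => by rw [Multiset.count_cons_of_ne (ne_of_mem_erase hx)],
    Multiset.count_cons_self, pow_succ, Nat.factorial_succ]
  ring

lemma zFactor_eq_mul_zFactor_erase {s : Multiset ℕ} {n : ℕ} (hn : n ∈ s) :
    zFactor s = n * s.count n * zFactor (s.erase n) := by
  conv_lhs => rw [← Multiset.cons_erase hn]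
  rw [zFactor_cons, Multiset.count_erase_self, Nat.sub_add_cancel (Multiset.count_pos.2 hn)]

lemma sum_mul_inv_zFactor {K : Type*} [Field K] [CharZero K] {s : Multiset ℕ} (hs : 0 ∉ s) :
    (s.sum : K) * (zFactor s : K)⁻¹ = ∑ n ∈ s.toFinset, (zFactor (s.erase n) : K)⁻¹ := by
  have herase : ∀ n ∈ s.toFinset,
      (zFactor (s.erase n) : K)⁻¹ = n * s.count n * (zFactor s : K)⁻¹ := by
    intro n hn
    have hn : n ∈ s := Multiset.mem_toFinset.1 hn
    have hnc : (n * s.count n : K) ≠ 0 := by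
      have : n ≠ 0 := fun h => hs (h ▸ hn)
      have := Multiset.count_ne_zero.2 hn
      positivity
    rw [zFactor_eq_mul_zFactor_erase hn, Nat.cast_mul, Nat.cast_mul, mul_inv,
      mul_inv_cancel_left₀ hnc]
  rw [sum_congr rfl herase, ← sum_mul, Finset.sum_multiset_count]
  push_cast [nsmul_eq_mul]
  simp_rw [mul_comm]

lemma sum_Icc_one_sub_eq_sum_range {M : Type*} [AddCommMonoid M] (f : ℕ → M) (m : ℕ) :
    ∑ n ∈ Icc 1 m, f (m - n) = ∑ j ∈ range m, f j := by
  rw [← sum_range_reflect, ← Ico_add_one_right_eq_Icc, sum_Ico_eq_sum_range, Nat.add_sub_cancel]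
  exact sum_congr rfl fun j _ => by rw [add_comm, Nat.sub_add_eq, Nat.sub_right_comm]

lemma Nat.Partition.card_parts_le {m : ℕ} (lam : m.Partition) : lam.parts.card ≤ m := by
  simpa [lam.parts_sum] using Multiset.card_nsmul_le_sum (a := 1) fun _ h => lam.parts_pos h

lemma Nat.Partition.sum_sum_erase_parts {M : Type*} [AddCommMonoid M] (m : ℕ)
    (g : Multiset ℕ → M) :
    ∑ lam : m.Partition, ∑ n ∈ lam.parts.toFinset, g (lam.parts.erase n) =
      ∑ n ∈ Icc 1 m, ∑ mu : (m - n).Partition, g mu.parts := by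
  rw [sum_comm' (t' := Icc 1 m) (s' := fun n => univ.filter (n ∈ ·.parts))]
  · refine sum_congr rfl fun n hn => ?_
    obtain ⟨h1, h2⟩ := mem_Icc.1 hn
    rw [sum_subtype _ (p := (n ∈ ·.parts)) (fun lam => by simp),
      ← Equiv.sum_comp (partitionWithPartEquiv h1 h2).symm]
    simp
  · intro lam n
    simp only [mem_univ, Multiset.mem_toFinset, mem_filter, mem_Icc, true_and]
    exact ⟨fun h => ⟨h, lam.parts_pos h, lam.le_of_mem_parts h⟩, fun h => h.1⟩

/-- The cycle index of `S_m` with every power sum specialised to `X`. -/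
noncomputable def cycleIndexPoly (m : ℕ) : ℚ[X] :=
  ∑ lam : m.Partition, C (zFactor lam.parts : ℚ)⁻¹ * X ^ lam.parts.card

lemma cycleIndexPoly_zero : cycleIndexPoly 0 = 1 := by
  simp [cycleIndexPoly, zFactor]

lemma partWeight_eq_sum_inv_zFactor (m k : ℕ) :
    partWeight m k = ∑ lam : m.Partition with lam.parts.card = k, (zFactor lam.parts : ℚ)⁻¹ := by
  refine sum_congr rfl fun lam _ => ?_
  have hsub : lam.parts.toFinset ⊆ Icc 1 m := fun n hn => by
    have hn := Multiset.mem_toFinset.1 hn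
    exact mem_Icc.2 ⟨lam.parts_pos hn, lam.le_of_mem_parts hn⟩
  rw [zFactor_eq_prod_of_subset hsub]
  push_cast
  simp only [one_div, prod_inv_distrib]

lemma sum_partWeight_eq_cycleIndexPoly (m : ℕ) :
    ∑ k ∈ range (m + 1), C (partWeight m k) * X ^ k = cycleIndexPoly m := by
  simp_rw [partWeight_eq_sum_inv_zFactor, map_sum, sum_mul]
  rw [cycleIndexPoly, ← sum_fiberwise_of_maps_to (g := fun lam : m.Partition => lam.parts.card)
    (t := range (m + 1)) fun lam _ => mem_range_succ_iff.2 lam.card_parts_le]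
  refine sum_congr rfl fun k _ => sum_congr rfl fun lam hlam => ?_
  rw [(mem_filter.1 hlam).2]

lemma nsmul_cycleIndexPoly (m : ℕ) :
    m • cycleIndexPoly m = X * ∑ j ∈ range m, cycleIndexPoly j := by
  calc m • cycleIndexPoly m
      = ∑ lam : m.Partition, ∑ n ∈ lam.parts.toFinset,
          C (zFactor (lam.parts.erase n) : ℚ)⁻¹ * X ^ ((lam.parts.erase n).card + 1) := by
        rw [cycleIndexPoly, smul_sum]
        refine sum_congr rfl fun lam _ => ?_
        have hpos : 0 ∉ lam.parts := fun h => (lam.parts_pos h).false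
        have hm : (m : ℚ) = lam.parts.sum := by rw [lam.parts_sum]
        rw [nsmul_eq_mul, ← C_eq_natCast, ← mul_assoc, ← C_mul, hm, sum_mul_inv_zFactor hpos,
          map_sum, sum_mul]
        refine sum_congr rfl fun n hn => ?_
        rw [Multiset.card_erase_add_one (Multiset.mem_toFinset.1 hn)]
    _ = ∑ n ∈ Icc 1 m, ∑ mu : (m - n).Partition,
          C (zFactor mu.parts : ℚ)⁻¹ * X ^ (mu.parts.card + 1) :=
        Nat.Partition.sum_sum_erase_parts m fun s => C (zFactor s : ℚ)⁻¹ * X ^ (s.card + 1)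
    _ = X * ∑ j ∈ range m, cycleIndexPoly j := by
        simp_rw [← sum_Icc_one_sub_eq_sum_range _ m, cycleIndexPoly, mul_sum, pow_succ',
          mul_left_comm]

lemma ascPochhammer_eq_prod_range {S : Type*} [CommSemiring S] (m : ℕ) :
    ascPochhammer S m = ∏ j ∈ range m, (X + C (j : S)) := by
  induction m with
  | zero => simp
  | succ m ih => rw [ascPochhammer_succ_right, prod_range_succ, ih, map_natCast]

section Pochhammer

variable {K : Type*} [Field K] [CharZero K]

lemma succ_nsmul_inv_factorial_mul_ascPochhammer_succ (m : ℕ) :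
    (m + 1) • (C ((m + 1).factorial : K)⁻¹ * ascPochhammer K (m + 1)) =
      (X + C (m : K)) * (C (m.factorial : K)⁻¹ * ascPochhammer K m) := by
  have hfac : ((m + 1 : ℕ) : K) * ((m + 1).factorial : K)⁻¹ = (m.factorial : K)⁻¹ := by
    rw [Nat.factorial_succ, Nat.cast_mul, mul_inv,
      mul_inv_cancel_left₀ (Nat.cast_ne_zero.2 m.succ_ne_zero)]
  rw [nsmul_eq_mul, ← map_natCast C, ← mul_assoc, ← C_mul, hfac, ascPochhammer_succ_right,
    ← map_natCast C]
  ring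

lemma nsmul_inv_factorial_mul_ascPochhammer (m : ℕ) :
    m • (C (m.factorial : K)⁻¹ * ascPochhammer K m) =
      X * ∑ j ∈ range m, C (j.factorial : K)⁻¹ * ascPochhammer K j := by
  induction m with
  | zero => simp
  | succ m ih =>
    rw [succ_nsmul_inv_factorial_mul_ascPochhammer_succ, add_mul, map_natCast, ← nsmul_eq_mul, ih,
      sum_range_succ]
    ring

end Pochhammer

lemma eq_of_nsmul_eq_mul_sum {R : Type*} [Semiring R] [IsAddTorsionFree R] (x : R)
    {a b : ℕ → R} (h0 : a 0 = b 0) (ha : ∀ m, m • a m = x * ∑ j ∈ range m, a j)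
    (hb : ∀ m, m • b m = x * ∑ j ∈ range m, b j) : a = b := by
  funext m
  induction m using Nat.strong_induction_on with
  | _ m ih =>
    rcases m with _ | m
    · exact h0
    · refine nsmul_right_injective m.succ_ne_zero ?_
      dsimp only
      rw [ha, hb, sum_congr rfl fun j hj => ih j (mem_range.1 hj)]

/-- The formal power series identity
`∑_{m,k} f(m,k) x^m y^k = (1-x)^{-y} = ∑_m (∏_{j=0}^{m-1}(y+j)/m!) x^m`,
as an identity of formal power series in `x` with coefficients in `ℚ[y]`. -/
theorem partWeight_powerSeries_identity :
    (PowerSeries.mk fun m =>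
        ∑ k ∈ Finset.range (m + 1), Polynomial.C (partWeight m k) * Polynomial.X ^ k) =
      (PowerSeries.mk fun m =>
        Polynomial.C ((Nat.factorial m : ℚ)⁻¹) *
          ∏ j ∈ Finset.range m, (Polynomial.X + Polynomial.C (j : ℚ))) := by
  simp_rw [sum_partWeight_eq_cycleIndexPoly, ← ascPochhammer_eq_prod_range]
  congr 1
  refine eq_of_nsmul_eq_mul_sum X ?_ nsmul_cycleIndexPoly nsmul_inv_factorial_mul_ascPochhammer
  simp [cycleIndexPoly_zero]
end
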